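/- Let ψ : (0,∞) → (0,∞) be continuous, non-decreasing, subadditive, with ψ(t) → 0 as t → 0⁺, and suppose limsup_{t→0⁺} ψ(t)/t < ∞. Define γ(0)=0, γ(t)=ψ(t) for t>0; then γ is a modulus function, and for every measurable A ⊆ ℝ, every ψ-density point of A is a γ-density point of A. -/

import Mathlib

open MeasureTheory Set Filter Topology

/-- γ is a modulus function (on [0,∞); values and hypotheses only matter for nonnegative arguments). -/
def IsModulus (γ : ℝ → ℝ) : Prop :=
  (∀ a, 0 ≤ a → 0 ≤ γ a) ∧
  (∀ a, 0 ≤ a → (γ a = 0 ↔ a = 0)) ∧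
  (∀ a b, 0 ≤ a → 0 ≤ b → γ (a + b) ≤ γ a + γ b) ∧
  ContinuousWithinAt γ (Set.Ici 0) 0 ∧
  (∀ a b, 0 ≤ a → a ≤ b → γ a ≤ γ b)

/-- |(x-α, x+α) ∩ Aᶜ| -/
noncomputable def mInt (A : Set ℝ) (x α : ℝ) : ℝ :=
  (volume (Set.Ioo (x - α) (x + α) ∩ Aᶜ)).toReal

/-- x is a γ-density point of A. -/
def IsGammaDensityPt (γ : ℝ → ℝ) (A : Set ℝ) (x : ℝ) : Prop :=
  Tendsto (fun α => γ (mInt A x α) / γ (2 * α)) (𝓝[>] (0:ℝ)) (𝓝 0)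

/-- x is a Lebesgue density point of A. -/
def IsLebDensityPt (A : Set ℝ) (x : ℝ) : Prop :=
  Tendsto (fun α => mInt A x α / (2 * α)) (𝓝[>] (0:ℝ)) (𝓝 0)

lemma mInt_nonneg (A : Set ℝ) (x α : ℝ) : 0 ≤ mInt A x α := ENNReal.toReal_nonneg

lemma mInt_le_two_mul (A : Set ℝ) (x : ℝ) {α : ℝ} (hα : 0 < α) : mInt A x α ≤ 2 * α := by
  have hvol : volume (Ioo (x - α) (x + α) ∩ Aᶜ) ≤ ENNReal.ofReal (2 * α) := by
    calc volume (Ioo (x - α) (x + α) ∩ Aᶜ) ≤ volume (Ioo (x - α) (x + α)) :=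
          measure_mono inter_subset_left
      _ = ENNReal.ofReal (2 * α) := by rw [Real.volume_Ioo]; ring_nf
  calc mInt A x α ≤ (ENNReal.ofReal (2 * α)).toReal :=
        ENNReal.toReal_mono ENNReal.ofReal_ne_top hvol
    _ = 2 * α := ENNReal.toReal_ofReal (by positivity)

/-- If `γ t ≤ C t` near `0`, then `γ(m) / γ(2h) ≤ 2Ch · m / (2h γ(2h))`, which tends to `0`. -/
theorem isGammaDensityPt_of_tendsto {γ : ℝ → ℝ} {A : Set ℝ} {x C δ : ℝ}
    (hγ : ∀ t, 0 ≤ t → 0 ≤ γ t) (hδ : 0 < δ) (hγC : ∀ t, 0 ≤ t → t < δ → γ t ≤ C * t)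
    (hA : Tendsto (fun h => mInt A x h / (2 * h * γ (2 * h))) (𝓝[>] 0) (𝓝 0)) :
    IsGammaDensityPt γ A x := by
  have hlin : Tendsto (fun h : ℝ => C * (2 * h)) (𝓝[>] 0) (𝓝 0) := by
    have : Continuous fun h : ℝ => C * (2 * h) := by fun_prop
    simpa using (this.tendsto 0).mono_left nhdsWithin_le_nhds
  refine squeeze_zero' ?_ ?_ (by simpa using hlin.mul hA)
  · filter_upwards [self_mem_nhdsWithin] with h (hh : 0 < h)
    exact div_nonneg (hγ _ (mInt_nonneg A x h)) (hγ _ (by positivity))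
  · filter_upwards [Ioo_mem_nhdsGT (half_pos hδ)] with h ⟨hh, hhδ⟩
    have hm := mInt_le_two_mul A x hh
    calc γ (mInt A x h) / γ (2 * h) ≤ C * mInt A x h / γ (2 * h) :=
          div_le_div_of_nonneg_right (hγC _ (mInt_nonneg A x h) (by linarith))
            (hγ _ (by positivity))
      _ = C * (2 * h) * (mInt A x h / (2 * h * γ (2 * h))) := by
          rw [mul_div_assoc', mul_right_comm, mul_comm (2 * h),
            mul_div_mul_right _ _ (by positivity)]

noncomputable def zeroExtend (ψ : ℝ → ℝ) (t : ℝ) : ℝ := if t ≤ 0 then 0 else ψ t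

section zeroExtend

variable {ψ : ℝ → ℝ}

lemma zeroExtend_zero : zeroExtend ψ 0 = 0 := if_pos le_rfl

lemma zeroExtend_of_pos {t : ℝ} (ht : 0 < t) : zeroExtend ψ t = ψ t := if_neg ht.not_ge

lemma zeroExtend_nonneg (hpos : ∀ t, 0 < t → 0 < ψ t) {t : ℝ} (ht : 0 ≤ t) :
    0 ≤ zeroExtend ψ t := by
  rcases ht.eq_or_lt with rfl | ht
  · rw [zeroExtend_zero]
  · rw [zeroExtend_of_pos ht]; exact (hpos t ht).le

theorem isModulus_zeroExtend (hpos : ∀ t, 0 < t → 0 < ψ t)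
    (hmono : ∀ s t, 0 < s → s ≤ t → ψ s ≤ ψ t)
    (hsub : ∀ s t, 0 < s → 0 < t → ψ (s + t) ≤ ψ s + ψ t)
    (hlim : Tendsto ψ (𝓝[>] 0) (𝓝 0)) :
    IsModulus (zeroExtend ψ) := by
  refine ⟨fun a ha => zeroExtend_nonneg hpos ha, ?_, ?_, ?_, ?_⟩
  · intro a ha
    rcases ha.eq_or_lt with rfl | ha
    · simp [zeroExtend_zero]
    · simp [zeroExtend_of_pos ha, (hpos a ha).ne', ha.ne']
  · intro a b ha hb
    rcases ha.eq_or_lt with rfl | ha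
    · simp [zeroExtend_zero]
    rcases hb.eq_or_lt with rfl | hb
    · simp [zeroExtend_zero]
    rw [zeroExtend_of_pos ha, zeroExtend_of_pos hb, zeroExtend_of_pos (add_pos ha hb)]
    exact hsub a b ha hb
  · rw [← continuousWithinAt_Ioi_iff_Ici, ContinuousWithinAt, zeroExtend_zero]
    refine hlim.congr' ?_
    filter_upwards [self_mem_nhdsWithin] with t ht
    exact (zeroExtend_of_pos ht).symm
  · intro a b ha hab
    rcases ha.eq_or_lt with rfl | ha
    · rw [zeroExtend_zero]; exact zeroExtend_nonneg hpos hab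
    · rw [zeroExtend_of_pos ha, zeroExtend_of_pos (ha.trans_le hab)]
      exact hmono a b ha hab

lemma zeroExtend_le_mul {C δ : ℝ} (hC : ∀ t, 0 < t → t < δ → ψ t ≤ C * t) {t : ℝ} (ht : 0 ≤ t)
    (htδ : t < δ) : zeroExtend ψ t ≤ C * t := by
  rcases ht.eq_or_lt with rfl | ht
  · simp [zeroExtend_zero]
  · rw [zeroExtend_of_pos ht]; exact hC t ht htδ

end zeroExtend

theorem stmt13_general (ψ : ℝ → ℝ)
    (hpos : ∀ t : ℝ, 0 < t → 0 < ψ t)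
    (hmono : ∀ s t : ℝ, 0 < s → s ≤ t → ψ s ≤ ψ t)
    (hsub : ∀ s t : ℝ, 0 < s → 0 < t → ψ (s + t) ≤ ψ s + ψ t)
    (hlim : Tendsto ψ (𝓝[>] (0:ℝ)) (𝓝 0))
    (hbdd : ∃ C : ℝ, 0 < C ∧ ∃ δ : ℝ, 0 < δ ∧ ∀ t : ℝ, 0 < t → t < δ → ψ t ≤ C * t) :
    IsModulus (fun t => if t ≤ 0 then 0 else ψ t) ∧
    ∀ (A : Set ℝ), MeasurableSet A → ∀ x : ℝ,
      Tendsto (fun h => mInt A x h / (2 * h * ψ (2 * h))) (𝓝[>] (0:ℝ)) (𝓝 0) →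
      IsGammaDensityPt (fun t => if t ≤ 0 then 0 else ψ t) A x := by
  refine ⟨isModulus_zeroExtend hpos hmono hsub hlim, fun A _ x hA => ?_⟩
  obtain ⟨C, -, δ, hδ, hC⟩ := hbdd
  refine isGammaDensityPt_of_tendsto (fun t => zeroExtend_nonneg hpos) hδ
    (fun t => zeroExtend_le_mul hC) (hA.congr' ?_)
  filter_upwards [self_mem_nhdsWithin] with h (hh : 0 < h)
  change _ = _ / (2 * h * zeroExtend ψ (2 * h))
  rw [zeroExtend_of_pos (by positivity : 0 < 2 * h)]

theorem stmt13 (ψ : ℝ → ℝ)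
    (hpos : ∀ t : ℝ, 0 < t → 0 < ψ t)
    (hcont : ContinuousOn ψ (Set.Ioi 0))
    (hmono : ∀ s t : ℝ, 0 < s → s ≤ t → ψ s ≤ ψ t)
    (hsub : ∀ s t : ℝ, 0 < s → 0 < t → ψ (s + t) ≤ ψ s + ψ t)
    (hlim : Tendsto ψ (𝓝[>] (0:ℝ)) (𝓝 0))
    (hbdd : ∃ C : ℝ, 0 < C ∧ ∃ δ : ℝ, 0 < δ ∧ ∀ t : ℝ, 0 < t → t < δ → ψ t ≤ C * t) :
    IsModulus (fun t => if t ≤ 0 then 0 else ψ t) ∧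
    ∀ (A : Set ℝ), MeasurableSet A → ∀ x : ℝ,
      Tendsto (fun h => mInt A x h / (2 * h * ψ (2 * h))) (𝓝[>] (0:ℝ)) (𝓝 0) →
      IsGammaDensityPt (fun t => if t ≤ 0 then 0 else ψ t) A x :=
  stmt13_general ψ hpos hmono hsub hlim hbdd
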